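/- arXiv:2512.16805 — 4 statements merged into one kernel-verified Lean document; each statement's English description precedes it below -/
import Mathlib

section
/- Let (U, 𝒮) be a SetCover instance with finite universe U, let U' = U ⊔ U, 𝒮' = 𝒮 ∪ { {u, u'} : u ∈ U }, and let D = { u' : u ∈ U } be the set of all duplicates. If OPT(U, 𝒮) < |U|, then OPT(U', 𝒮' ∪ {D}) = OPT(U, 𝒮) + 1. -/
open Finset

variable {α : Type*} [DecidableEq α]

/-- `C` is a cover of the set-cover instance with universe `U` and set family `F`:
it is a subfamily of `F` whose union is `U`. -/
def IsCover {β : Type*} [DecidableEq β] (U : Finset β) (F : Finset (Finset β))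
    (C : Finset (Finset β)) : Prop :=
  C ⊆ F ∧ C.sup id = U

/-- `coverOPT U F` is the minimum cardinality of a cover of the instance `(U, F)`. -/
noncomputable def coverOPT {β : Type*} [DecidableEq β] (U : Finset β)
    (F : Finset (Finset β)) : ℕ :=
  sInf {n | ∃ C, IsCover U F C ∧ C.card = n}

/-- The duplicated universe `U' = U ⊔ U`: the original elements (`Sum.inl`)
together with a fresh copy (`Sum.inr`) of each element. -/
def dupUniv (U : Finset α) : Finset (α ⊕ α) := U.image Sum.inl ∪ U.image Sum.inr

/-- The original family `𝒮`, viewed inside the duplicated universe. -/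
def liftSets (F : Finset (Finset α)) : Finset (Finset (α ⊕ α)) :=
  F.image fun s => s.image Sum.inl

/-- The family of pair sets `{u, u'}` for `u ∈ U`. -/
def pairSets (U : Finset α) : Finset (Finset (α ⊕ α)) :=
  U.image fun u => ({Sum.inl u, Sum.inr u} : Finset (α ⊕ α))

/-- The set `D = {u' : u ∈ U}` of all duplicates. -/
def dupSet (U : Finset α) : Finset (α ⊕ α) := U.image Sum.inr

/-!
Adding `D` to an optimal cover of `(U, 𝒮)` gives the upper bound. For the lower bound, take a
cover `C` of `U'`. If `D ∈ C`, the remaining members, restricted to the original coordinates, each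
lie in a set of `𝒮` (a pair `{u, u'}` restricts to `{u} ⊆ t ∈ 𝒮`) and still cover `U`, so
`|C| - 1 ≥ OPT(U, 𝒮)`. If `D ∉ C`, each duplicate `u'` can only be covered by `{u, u'}`, so
`|C| ≥ |U| > OPT(U, 𝒮)`.
-/

section Cover

variable {β : Type*} [DecidableEq β] {U : Finset β} {F C : Finset (Finset β)}

lemma coverOPT_le (hC : IsCover U F C) : coverOPT U F ≤ C.card :=
  Nat.sInf_le ⟨C, hC, rfl⟩

lemma exists_isCover_card_eq_coverOPT (h : ∃ C, IsCover U F C) :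
    ∃ C, IsCover U F C ∧ C.card = coverOPT U F := by
  obtain ⟨C, hC⟩ := h
  exact Nat.sInf_mem (s := {n | ∃ C, IsCover U F C ∧ C.card = n}) ⟨_, C, hC, rfl⟩

lemma le_coverOPT {n : ℕ} (hne : ∃ C, IsCover U F C)
    (h : ∀ C, IsCover U F C → n ≤ C.card) : n ≤ coverOPT U F := by
  obtain ⟨C, hC, hcard⟩ := exists_isCover_card_eq_coverOPT hne
  exact hcard ▸ h C hC

lemma coverOPT_le_card_of_refinement (hF : F.sup id = U) (hC : ∀ s ∈ C, ∃ t ∈ F, s ⊆ t)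
    (hU : U ⊆ C.sup id) : coverOPT U F ≤ C.card := by
  choose! g hgF hg using hC
  refine (coverOPT_le (C := C.image g) ⟨?_, le_antisymm ?_ ?_⟩).trans card_image_le
  · exact image_subset_iff.2 hgF
  · exact hF ▸ sup_mono (image_subset_iff.2 hgF)
  · exact hU.trans <| Finset.sup_le fun s hs =>
      (hg s hs).trans (le_sup (f := id) (mem_image_of_mem g hs))

end Cover

section Duplication

variable {U : Finset α} {F : Finset (Finset α)} {C : Finset (Finset (α ⊕ α))}

lemma inl_notMem_dupSet (a : α) : Sum.inl a ∉ dupSet U := by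
  simp [dupSet]

lemma card_pairSets : (pairSets U).card = U.card := by
  refine card_image_of_injective _ fun u v huv => ?_
  have : Sum.inl u ∈ ({Sum.inl v, Sum.inr v} : Finset (α ⊕ α)) := huv ▸ by simp
  simpa using this

lemma isCover_insert_dupSet_image {C₀ : Finset (Finset α)} (hC₀ : IsCover U F C₀) :
    IsCover (dupUniv U) (insert (dupSet U) (liftSets F ∪ pairSets U))
      (insert (dupSet U) (C₀.image fun s => s.image Sum.inl)) := by
  refine ⟨insert_subset_insert _ ((image_subset_image hC₀.1).trans subset_union_left), ?_⟩
  have hlift : (C₀.image fun s => s.image (Sum.inl (β := α))).sup id = U.image Sum.inl := by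
    rw [sup_image, ← hC₀.2, sup_eq_biUnion, sup_eq_biUnion, biUnion_image]
    rfl
  rw [sup_insert, hlift, dupUniv, dupSet, sup_eq_union, id_eq, union_comm]

lemma exists_toLeft_subset (hF : F.sup id = U) {s : Finset (α ⊕ α)}
    (hs : s ∈ liftSets F ∪ pairSets U) : ∃ t ∈ F, s.toLeft ⊆ t := by
  rcases mem_union.1 hs with hs | hs
  · obtain ⟨t, ht, rfl⟩ := mem_image.1 hs
    exact ⟨t, ht, fun a => by simp⟩
  · obtain ⟨u, hu, rfl⟩ := mem_image.1 hs
    obtain ⟨t, ht, hut⟩ := mem_sup.1 (hF ▸ hu)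
    exact ⟨t, ht, fun a ha => by simp_all [mem_toLeft]⟩

lemma coverOPT_le_card_erase_dupSet (hF : F.sup id = U)
    (hC : IsCover (dupUniv U) (insert (dupSet U) (liftSets F ∪ pairSets U)) C) :
    coverOPT U F ≤ (C.erase (dupSet U)).card := by
  refine (coverOPT_le_card_of_refinement hF (C := (C.erase (dupSet U)).image toLeft) ?_ ?_).trans
    card_image_le
  · simp only [mem_image, forall_exists_index, and_imp]
    rintro _ s hs rfl
    exact exists_toLeft_subset hF
      ((mem_insert.1 (hC.1 (mem_of_mem_erase hs))).resolve_left (ne_of_mem_erase hs))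
  · intro u hu
    have : Sum.inl u ∈ C.sup id := hC.2 ▸ by simp [dupUniv, hu]
    obtain ⟨s, hs, hus⟩ := mem_sup.1 this
    have hsD : s ≠ dupSet U := by rintro rfl; exact inl_notMem_dupSet u hus
    exact mem_sup.2 ⟨s.toLeft, mem_image_of_mem _ (mem_erase.2 ⟨hsD, hs⟩),
      by simpa using hus⟩

lemma pairSets_subset_of_dupSet_notMem
    (hC : IsCover (dupUniv U) (insert (dupSet U) (liftSets F ∪ pairSets U)) C)
    (hD : dupSet U ∉ C) : pairSets U ⊆ C := by
  intro p hp
  obtain ⟨u, hu, rfl⟩ := mem_image.1 hp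
  have : Sum.inr u ∈ C.sup id := hC.2 ▸ by simp [dupUniv, hu]
  obtain ⟨s, hs, hus⟩ := mem_sup.1 this
  rcases mem_insert.1 (hC.1 hs) with rfl | hs'
  · exact absurd hs hD
  rcases mem_union.1 hs' with hs' | hs'
  · obtain ⟨t, -, rfl⟩ := mem_image.1 hs'
    simp at hus
  · obtain ⟨v, -, rfl⟩ := mem_image.1 hs'
    obtain rfl : u = v := by simpa using hus
    exact hs

end Duplication

/-- If `OPT(U, 𝒮) < |U|`, then `OPT(U', 𝒮' ∪ {D}) = OPT(U, 𝒮) + 1`. -/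
theorem stmt1 (U : Finset α) (F : Finset (Finset α)) (hF : F.sup id = U)
    (hlt : coverOPT U F < U.card) :
    coverOPT (dupUniv U) (insert (dupSet U) (liftSets F ∪ pairSets U)) =
      coverOPT U F + 1 := by
  obtain ⟨C₀, hC₀, hC₀card⟩ := exists_isCover_card_eq_coverOPT ⟨F, subset_rfl, hF⟩
  have hcov := isCover_insert_dupSet_image hC₀
  apply le_antisymm
  · calc _ ≤ _ := coverOPT_le hcov
      _ ≤ (C₀.image fun s => s.image (Sum.inl (β := α))).card + 1 := card_insert_le _ _
      _ ≤ coverOPT U F + 1 := by rw [← hC₀card]; gcongr; exact card_image_le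
  refine le_coverOPT ⟨_, hcov⟩ fun C hC => ?_
  by_cases hD : dupSet U ∈ C
  · have hle := coverOPT_le_card_erase_dupSet hF hC
    rw [card_erase_of_mem hD] at hle
    have hpos := card_pos.2 ⟨_, hD⟩
    omega
  · have hle := card_le_card (pairSets_subset_of_dupSet_notMem hC hD)
    rw [card_pairSets] at hle
    omega
end

section
/- Let (U, 𝒮) be a SetCover instance with finite universe U, let U' = U ⊔ U, 𝒮' = 𝒮 ∪ { {u, u'} : u ∈ U }, and D = { u' : u ∈ U }. If C is a cover of (U', 𝒮' ∪ {D}) with D ∈ C, then there exists a cover C'' of (U', 𝒮' ∪ {D}) with |C''| ≤ |C|, D ∈ C'', and C'' \ {D} ⊆ 𝒮 (i.e. C'' contains no pair set {u, u'}). -/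
open Finset

variable {α : Type*} [DecidableEq α]

/-- If `C` is a cover of `(U', 𝒮' ∪ {D})` with `D ∈ C`, then there is a cover `C''` with
`|C''| ≤ |C|`, `D ∈ C''`, and `C'' \ {D} ⊆ 𝒮` (no pair sets). -/
theorem stmt2 (U : Finset α) (F : Finset (Finset α)) (hF : F.sup id = U)
    (C : Finset (Finset (α ⊕ α)))
    (hC : IsCover (dupUniv U) (insert (dupSet U) (liftSets F ∪ pairSets U)) C)
    (hD : dupSet U ∈ C) :
    ∃ C'', IsCover (dupUniv U) (insert (dupSet U) (liftSets F ∪ pairSets U)) C'' ∧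
      C''.card ≤ C.card ∧ dupSet U ∈ C'' ∧ C'' \ {dupSet U} ⊆ liftSets F := by
  classical
  obtain ⟨hCsub, hCcov⟩ := hC
  have hpick : ∀ u ∈ U, ∃ s ∈ F, u ∈ s := by
    intro u hu; rw [← hF] at hu; simpa [Finset.mem_sup] using hu
  choose! f hfF hfmem using hpick
  set g : Finset (α ⊕ α) → Finset (α ⊕ α) :=
    fun t => if h : ∃ u ∈ U, t = ({Sum.inl u, Sum.inr u} : Finset (α ⊕ α))
      then (f h.choose).image Sum.inl else t with hg
  have hgD : g (dupSet U) = dupSet U := by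
    simp only [hg]
    rw [dif_neg]
    rintro ⟨u, hu, hEq⟩
    have : (Sum.inl u : α ⊕ α) ∈ dupSet U := by rw [hEq]; simp
    simp [dupSet] at this
  have hglift : ∀ s ∈ liftSets F, g s = s := by
    intro s hs
    simp only [liftSets, mem_image] at hs
    obtain ⟨s₀, _, rfl⟩ := hs
    simp only [hg]
    rw [dif_neg]
    rintro ⟨u, hu, hEq⟩
    have : (Sum.inr u : α ⊕ α) ∈ s₀.image Sum.inl := by rw [hEq]; simp
    simp at this
  have hgpair : ∀ t, (∃ u ∈ U, t = ({Sum.inl u, Sum.inr u} : Finset (α ⊕ α))) →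
      ∀ u ∈ U, t = ({Sum.inl u, Sum.inr u} : Finset (α ⊕ α)) →
      g t = (f u).image Sum.inl := by
    intro t h u hu hEq
    simp only [hg]
    rw [dif_pos h]
    obtain ⟨hv, hEq'⟩ := h.choose_spec
    have : Sum.inl h.choose = (Sum.inl u : α ⊕ α) := by
      have hAB : ({Sum.inl u, Sum.inr u} : Finset (α ⊕ α)) = {Sum.inl h.choose, Sum.inr h.choose} :=
        hEq.symm.trans hEq'
      have : (Sum.inl h.choose : α ⊕ α) ∈ ({Sum.inl u, Sum.inr u} : Finset (α ⊕ α)) := by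
        rw [hAB]; simp
      simpa using this
    rw [Sum.inl.injEq] at this
    rw [this]
  have hgsub : ∀ t ∈ C, g t ∈ insert (dupSet U) (liftSets F ∪ pairSets U) := by
    intro t ht
    have := hCsub ht
    simp only [mem_insert, mem_union] at this
    rcases this with rfl | hl | hp
    · rw [hgD]; simp
    · rw [hglift t hl]; simp [hl]
    · simp only [pairSets, mem_image] at hp
      obtain ⟨u, hu, rfl⟩ := hp
      rw [hgpair _ ⟨u, hu, rfl⟩ u hu rfl]
      have : (f u).image Sum.inl ∈ liftSets F := by
        simp only [liftSets, mem_image]; exact ⟨f u, hfF u hu, rfl⟩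
      simp [this]
  refine ⟨C.image g, ⟨?_, ?_⟩, card_image_le, ?_, ?_⟩
  · intro t ht
    simp only [mem_image] at ht
    obtain ⟨t₀, ht₀, rfl⟩ := ht
    exact hgsub t₀ ht₀
  · apply le_antisymm
    · apply Finset.sup_le
      intro t ht
      simp only [mem_image] at ht
      obtain ⟨t₀, ht₀, rfl⟩ := ht
      simp only [id_eq]
      have hsub := hCsub ht₀
      simp only [mem_insert, mem_union] at hsub
      rcases hsub with rfl | hl | hp
      · rw [hgD]
        intro x hx
        simp only [dupSet, mem_image] at hx
        obtain ⟨u, hu, rfl⟩ := hx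
        simp [dupUniv, hu]
      · rw [hglift t₀ hl, ← hCcov]
        exact Finset.le_sup (f := id) ht₀
      · simp only [pairSets, mem_image] at hp
        obtain ⟨u, hu, rfl⟩ := hp
        rw [hgpair _ ⟨u, hu, rfl⟩ u hu rfl]
        intro x hx
        simp only [mem_image] at hx
        obtain ⟨v, hv, rfl⟩ := hx
        have : v ∈ U := by
          rw [← hF]
          exact Finset.mem_sup.2 ⟨f u, hfF u hu, hv⟩
        simp [dupUniv, this]
    · intro x hx
      simp only [dupUniv, mem_union, mem_image] at hx
      rcases hx with ⟨u, hu, rfl⟩ | ⟨u, hu, rfl⟩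
      · have : (Sum.inl u : α ⊕ α) ∈ C.sup id := by rw [hCcov]; simp [dupUniv, hu]
        obtain ⟨t, htC, hut⟩ := Finset.mem_sup.1 this
        have hsub := hCsub htC
        simp only [mem_insert, mem_union] at hsub
        rcases hsub with rfl | hl | hp
        · simp only [id_eq, dupSet, mem_image] at hut
          obtain ⟨v, _, hv⟩ := hut
          exact absurd hv (by simp)
        · refine Finset.mem_sup.2 ⟨g t, mem_image_of_mem g htC, ?_⟩
          rw [hglift t hl] at *
          exact hut
        · simp only [pairSets, mem_image] at hp
          obtain ⟨v, hv, rfl⟩ := hp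
          have huv : u = v := by
            simp only [id_eq, mem_insert, mem_singleton] at hut
            rcases hut with h | h
            · exact Sum.inl.inj h
            · exact absurd h (by simp)
          subst huv
          refine Finset.mem_sup.2 ⟨_, mem_image_of_mem g htC, ?_⟩
          rw [hgpair _ ⟨u, hv, rfl⟩ u hv rfl]
          simp only [id_eq, mem_image]
          exact ⟨u, hfmem u hv, rfl⟩
      · refine Finset.mem_sup.2 ⟨dupSet U, by rw [← hgD]; exact mem_image_of_mem g hD, ?_⟩
        simp [dupSet, hu]
  · rw [← hgD]; exact mem_image_of_mem g hD
  · intro t ht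
    simp only [mem_sdiff, mem_image, mem_singleton] at ht
    obtain ⟨⟨t₀, ht₀, rfl⟩, hne⟩ := ht
    have := hCsub ht₀
    simp only [mem_insert, mem_union] at this
    rcases this with rfl | hl | hp
    · exact absurd hgD hne
    · rw [hglift t₀ hl]; exact hl
    · simp only [pairSets, mem_image] at hp
      obtain ⟨u, hu, rfl⟩ := hp
      rw [hgpair _ ⟨u, hu, rfl⟩ u hu rfl]
      simp only [liftSets, mem_image]; exact ⟨f u, hfF u hu, rfl⟩
end

section
/- Let (U, 𝒮) be a SetCover instance with finite universe U, let U' = U ⊔ U, 𝒮' = 𝒮 ∪ { {u, u'} : u ∈ U }, and D = { u' : u ∈ U }. If C is a cover of (U', 𝒮' ∪ {D}) with D ∉ C, then C contains all |U| pair sets {u, u'} (u ∈ U); in particular |C| ≥ |U|. -/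
open Finset

variable {α : Type*} [DecidableEq α]

/-- If `C` is a cover of `(U', 𝒮' ∪ {D})` with `D ∉ C`, then `C` contains all `|U|`
pair sets `{u, u'}`; in particular `|C| ≥ |U|`. -/
theorem stmt3 (U : Finset α) (F : Finset (Finset α)) (hF : F.sup id = U)
    (C : Finset (Finset (α ⊕ α)))
    (hC : IsCover (dupUniv U) (insert (dupSet U) (liftSets F ∪ pairSets U)) C)
    (hD : dupSet U ∉ C) :
    pairSets U ⊆ C ∧ U.card ≤ C.card := by

  obtain ⟨hsub, hcov⟩ := hC
  have key : pairSets U ⊆ C := by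
    intro p hp
    simp only [pairSets, mem_image] at hp
    obtain ⟨u, hu, rfl⟩ := hp
    -- inr u is covered by some s ∈ C
    have hmem : Sum.inr u ∈ C.sup id := by
      rw [hcov]
      simp [dupUniv, hu]
    rw [mem_sup] at hmem
    obtain ⟨s, hsC, hus⟩ := hmem
    simp only [id] at hus
    have hsF := hsub hsC
    rw [mem_insert, mem_union] at hsF
    rcases hsF with h | h | h
    · exact absurd (h ▸ hsC) hD
    · exfalso
      simp only [liftSets, mem_image] at h
      obtain ⟨t, _, rfl⟩ := h
      simp at hus
    · simp only [pairSets, mem_image] at h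
      obtain ⟨v, hv, rfl⟩ := h
      have : v = u := by
        rcases mem_insert.mp hus with h | h
        · exact absurd h (by simp)
        · simpa using (mem_singleton.mp h).symm
      subst this
      exact hsC
  refine ⟨key, ?_⟩
  calc U.card = (pairSets U).card := by
        rw [pairSets, card_image_of_injective _ ?_]
        intro a b hab
        have hab' : ({Sum.inl a, Sum.inr a} : Finset (α ⊕ α)) = {Sum.inl b, Sum.inr b} := hab
        have : Sum.inl a ∈ ({Sum.inl b, Sum.inr b} : Finset (α ⊕ α)) := by
          rw [← hab']; simp
        simpa using this
    _ ≤ C.card := card_le_card key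
end

section
/- Let (U, 𝒮) be a SetCover instance with finite universe U, let U' = U ⊔ U, 𝒮' = 𝒮 ∪ { {u, u'} : u ∈ U }, and D = { u' : u ∈ U }. Equip the weighted instance (U', 𝒮' ∪ {D}, w') with weights w'(D) = 0 and w'(s) = 1 for every other set s ∈ 𝒮'. Then the minimum total weight of a cover of (U', 𝒮' ∪ {D}, w') equals OPT(U, 𝒮), the minimum cardinality of a cover of the original unweighted instance. -/
open Finset

variable {α : Type*} [DecidableEq α]

/-- In the weighted instance `(U', 𝒮' ∪ {D}, w')` with `w'(D) = 0` and `w'(s) = 1` for every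
other set `s ∈ 𝒮'`, the minimum total weight of a cover equals `OPT(U, 𝒮)`, the minimum
cardinality of a cover of the original unweighted instance. -/
theorem stmt8 (U : Finset α) (F : Finset (Finset α)) (hF : F.sup id = U)
    (w' : Finset (α ⊕ α) → ℚ) (hwD : w' (dupSet U) = 0)
    (hw1 : ∀ t ∈ liftSets F ∪ pairSets U, t ≠ dupSet U → w' t = 1) :
    (∃ C, IsCover (dupUniv U) (insert (dupSet U) (liftSets F ∪ pairSets U)) C ∧
      ∑ t ∈ C, w' t = (coverOPT U F : ℚ)) ∧
    ∀ C, IsCover (dupUniv U) (insert (dupSet U) (liftSets F ∪ pairSets U)) C →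
      (coverOPT U F : ℚ) ≤ ∑ t ∈ C, w' t := by
  classical
  have hne : (Set.univ ∩ {n | ∃ C, IsCover U F C ∧ C.card = n}).Nonempty ∨ True := Or.inr trivial
  have hmem : (coverOPT U F) ∈ {n | ∃ C, IsCover U F C ∧ C.card = n} :=
    Nat.sInf_mem ⟨F.card, F, ⟨subset_rfl, hF⟩, rfl⟩
  obtain ⟨C₀, hC₀, hcard⟩ := hmem
  constructor
  · by_cases hU : U = ∅
    · refine ⟨∅, ⟨empty_subset _, by simp [dupUniv, hU]⟩, ?_⟩
      have h0 : coverOPT U F = 0 :=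
        Nat.sInf_eq_zero.mpr (Or.inl ⟨∅, ⟨empty_subset _, by simp [hU]⟩, rfl⟩)
      simp [h0]
    · obtain ⟨u₀, hu₀⟩ := Finset.nonempty_iff_ne_empty.mpr hU
      set L := C₀.image (fun s => s.image (Sum.inl : α → α ⊕ α)) with hLdef
      have hLsub : L ⊆ liftSets F := Finset.image_subset_image hC₀.1
      have hDnotL : dupSet U ∉ L := by
        intro hD
        obtain ⟨s, _, hs⟩ := Finset.mem_image.mp hD
        have : Sum.inr u₀ ∈ s.image Sum.inl := by
          rw [hs]; exact Finset.mem_image_of_mem _ hu₀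
        obtain ⟨x, _, hx⟩ := Finset.mem_image.mp this
        exact Sum.inl_ne_inr hx
      refine ⟨insert (dupSet U) L, ⟨?_, ?_⟩, ?_⟩
      · exact Finset.insert_subset_insert _ (hLsub.trans Finset.subset_union_left)
      · ext x
        simp only [Finset.mem_sup, Finset.mem_insert, id_eq, dupUniv, Finset.mem_union,
          Finset.mem_image, dupSet, hLdef]
        constructor
        · rintro ⟨t, ht | ht, hxt⟩
          · rw [ht] at hxt
            obtain ⟨u, hu, rfl⟩ := Finset.mem_image.mp hxt
            exact Or.inr ⟨u, hu, rfl⟩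
          · obtain ⟨s, hs, rfl⟩ := ht
            obtain ⟨u, hu, rfl⟩ := Finset.mem_image.mp hxt
            have : u ∈ U := by
              rw [← hC₀.2]
              exact Finset.mem_sup.mpr ⟨s, hs, hu⟩
            exact Or.inl ⟨u, this, rfl⟩
        · rintro (⟨u, hu, rfl⟩ | ⟨u, hu, rfl⟩)
          · have : u ∈ C₀.sup id := hC₀.2 ▸ hu
            obtain ⟨s, hs, hus⟩ := Finset.mem_sup.mp this
            exact ⟨s.image Sum.inl, Or.inr ⟨s, hs, rfl⟩,
              Finset.mem_image_of_mem _ hus⟩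
          · exact ⟨U.image Sum.inr, Or.inl rfl, Finset.mem_image_of_mem _ hu⟩
      · rw [Finset.sum_insert hDnotL, hwD, zero_add]
        have hall : ∀ t ∈ L, w' t = 1 := by
          intro t ht
          refine hw1 t (Finset.mem_union_left _ (hLsub ht)) ?_
          intro h; rw [h] at ht; exact hDnotL ht
        rw [Finset.sum_congr rfl hall, Finset.sum_const, nsmul_eq_mul, mul_one]
        have : L.card = C₀.card :=
          Finset.card_image_of_injective _ (Finset.image_injective Sum.inl_injective)
        rw [this, hcard]
  · intro C hC
    -- choose, for each set in the family other than D, a set in F covering its inl-part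
    have hchoose : ∀ t ∈ liftSets F ∪ pairSets U, ∃ s ∈ F, ∀ u, Sum.inl u ∈ t → u ∈ s := by
      intro t ht
      rcases Finset.mem_union.mp ht with ht | ht
      · obtain ⟨s, hs, rfl⟩ := Finset.mem_image.mp ht
        refine ⟨s, hs, fun u hu => ?_⟩
        obtain ⟨x, hx, hxe⟩ := Finset.mem_image.mp hu
        rwa [← Sum.inl_injective hxe]
      · obtain ⟨v, hv, rfl⟩ := Finset.mem_image.mp ht
        have : v ∈ F.sup id := hF ▸ hv
        obtain ⟨s, hs, hvs⟩ := Finset.mem_sup.mp this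
        refine ⟨s, hs, fun u hu => ?_⟩
        rcases Finset.mem_insert.mp hu with h | h
        · rwa [Sum.inl_injective h]
        · exact absurd (Finset.mem_singleton.mp h) Sum.inl_ne_inr
    set g : Finset (α ⊕ α) → Finset α := fun t =>
      if h : ∃ s ∈ F, ∀ u, Sum.inl u ∈ t → u ∈ s then h.choose else ∅ with hg
    have hgF : ∀ t ∈ liftSets F ∪ pairSets U, g t ∈ F := by
      intro t ht
      have h := hchoose t ht
      simp only [hg, dif_pos h]
      exact h.choose_spec.1
    have hgmem : ∀ t ∈ liftSets F ∪ pairSets U, ∀ u, Sum.inl u ∈ t → u ∈ g t := by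
      intro t ht
      have h := hchoose t ht
      simp only [hg, dif_pos h]
      exact h.choose_spec.2
    have hCmem : ∀ t ∈ C.erase (dupSet U), t ∈ liftSets F ∪ pairSets U := by
      intro t ht
      have h1 := hC.1 (Finset.mem_of_mem_erase ht)
      rcases Finset.mem_insert.mp h1 with h | h
      · exact absurd h (Finset.ne_of_mem_erase ht)
      · exact h
    set B := (C.erase (dupSet U)).image g with hB
    have hBcover : IsCover U F B := by
      constructor
      · intro s hs
        obtain ⟨t, ht, rfl⟩ := Finset.mem_image.mp hs
        exact hgF t (hCmem t ht)
      · apply le_antisymm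
        · apply Finset.sup_le
          intro s hs
          obtain ⟨t, ht, rfl⟩ := Finset.mem_image.mp hs
          have : g t ∈ F := hgF t (hCmem t ht)
          calc id (g t) ≤ F.sup id := Finset.le_sup this
            _ = U := hF
        · intro u hu
          have : Sum.inl u ∈ dupUniv U :=
            Finset.mem_union_left _ (Finset.mem_image_of_mem _ hu)
          rw [← hC.2] at this
          obtain ⟨t, htC, hut⟩ := Finset.mem_sup.mp this
          have htne : t ≠ dupSet U := by
            intro h; rw [h] at hut
            obtain ⟨x, _, hx⟩ := Finset.mem_image.mp hut
            exact Sum.inl_ne_inr hx.symm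
          have hte : t ∈ C.erase (dupSet U) := Finset.mem_erase.mpr ⟨htne, htC⟩
          have : u ∈ g t := hgmem t (hCmem t hte) u hut
          exact Finset.mem_sup.mpr ⟨g t, Finset.mem_image_of_mem _ hte, this⟩
    have hopt_le : coverOPT U F ≤ (C.erase (dupSet U)).card :=
      le_trans (Nat.sInf_le ⟨B, hBcover, rfl⟩) (Finset.card_image_le)
    have hsum : ∑ t ∈ C, w' t = ((C.erase (dupSet U)).card : ℚ) := by
      have h1 : ∀ t ∈ C.erase (dupSet U), w' t = 1 := fun t ht =>
        hw1 t (hCmem t ht) (Finset.ne_of_mem_erase ht)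
      by_cases hD : dupSet U ∈ C
      · conv_lhs => rw [← Finset.insert_erase hD]
        rw [Finset.sum_insert (Finset.notMem_erase _ _), hwD,
          zero_add, Finset.sum_congr rfl h1, Finset.sum_const, nsmul_eq_mul, mul_one]
      · rw [Finset.erase_eq_of_notMem hD] at h1 ⊢
        rw [Finset.sum_congr rfl h1, Finset.sum_const, nsmul_eq_mul, mul_one]
    rw [hsum]
    exact_mod_cast hopt_le
end
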